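/- arXiv:1301.3963 — 2 statements merged into one kernel-verified Lean document; each statement's English description precedes it below -/
import Mathlib

section
/- Dual extension criterion: Fix p, Λ, Γ ∈ [1,∞), an integer n, and ε ∈ (0,1). Suppose (X,d_X) and (Y,d_Y) are metric spaces with (Y,d_Y) being W_p barycentric with constant Γ. Fix Z ⊆ X, a Lipschitz function f : Z → Y, and distinct x_1,…,x_n ∈ X. Suppose that for every symmetric n×n real matrix H = (h_{ij}) with nonnegative entries there exists Φ^H : {x_1,…,x_n} → Y with Φ^H = f on {x_1,…,x_n} ∩ Z such that Σ_{i,j} h_{ij} d_Y(Φ^H(x_i),Φ^H(x_j))^p ≤ Λ^p ||f||_Lip^p Σ_{i,j} h_{ij} d_X(x_i,x_j)^p. Then there exists F : {x_1,…,x_n} → Y with F = f on {x_1,…,x_n} ∩ Z and Lipschitz constant ||F||_Lip ≤ (1+ε)·Γ·Λ·||f||_Lip. -/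
open scoped BigOperators ENNReal
open scoped Classical

noncomputable section

/-- A finitely supported probability measure on `X`. -/
structure FinProb (X : Type*) where
  w : X →₀ ℝ
  nonneg : ∀ x, 0 ≤ w x
  total : w.sum (fun _ r => r) = 1

namespace FinProb

/-- The Dirac point mass at `x`. -/
def dirac {X : Type*} (x : X) : FinProb X where
  w := Finsupp.single x 1
  nonneg := fun y => by
    rw [Finsupp.single_apply]
    split <;> norm_num
  total := Finsupp.sum_single_index rfl

/-- The probability measure `∑ i, w i • δ_{Z i}` for nonnegative weights summing to 1. -/
def mix {ι X : Type*} [Fintype ι] (w : ι → ℝ) (Z : ι → X)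
    (hw : ∀ i, 0 ≤ w i) (h1 : ∑ i, w i = 1) : FinProb X where
  w := ∑ i, Finsupp.single (Z i) (w i)
  nonneg := fun x => by
    rw [Finset.sum_apply']
    refine Finset.sum_nonneg fun i _ => ?_
    rw [Finsupp.single_apply]
    split
    · exact hw i
    · exact le_rfl
  total := by
    rw [← Finsupp.sum_finset_sum_index (fun _ => rfl) (fun _ _ _ => rfl)]
    have h : ∀ i ∈ (Finset.univ : Finset ι),
        (Finsupp.single (Z i) (w i)).sum (fun _ r => r) = w i :=
      fun i _ => Finsupp.sum_single_index rfl
    rw [Finset.sum_congr rfl h]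
    exact h1

/-- `mix` with normalization of the weights. -/
def mixN {ι X : Type*} [Fintype ι] (w : ι → ℝ) (Z : ι → X)
    (hw : ∀ i, 0 ≤ w i) (hpos : 0 < ∑ i, w i) : FinProb X :=
  mix (fun i => w i / ∑ j, w j) Z
    (fun i => div_nonneg (hw i) hpos.le)
    (by rw [← Finset.sum_div, div_self (ne_of_gt hpos)])

/-- Integral of `f : X → ℝ` against `μ`. -/
def exp {X : Type*} (μ : FinProb X) (f : X → ℝ) : ℝ :=
  μ.w.sum fun x r => r * f x

end FinProb

/-- `π` is a coupling of `μ` and `ν`. -/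
def IsCoupling {X : Type*} (π : FinProb (X × X)) (μ ν : FinProb X) : Prop :=
  (∀ x : X, (π.w.sum fun q r => if q.1 = x then r else 0) = μ.w x) ∧
  (∀ y : X, (π.w.sum fun q r => if q.2 = y then r else 0) = ν.w y)

/-- The Wasserstein `p` distance between finitely supported probability measures. -/
def wassersteinDist {X : Type*} [MetricSpace X] (p : ℝ) (μ ν : FinProb X) : ℝ :=
  sInf {c : ℝ | ∃ π : FinProb (X × X), IsCoupling π μ ν ∧
    c = (π.exp fun q => dist q.1 q.2 ^ p) ^ p⁻¹}

/-- A barycenter map sends Dirac masses to their base points. -/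
def IsBarycenterMap {X : Type*} (bary : FinProb X → X) : Prop :=
  ∀ x : X, bary (FinProb.dirac x) = x

/-- `X` is `W_p` barycentric with constant `Γ` via the barycenter map `bary`. -/
def IsWBarycentric {X : Type*} [MetricSpace X] (p Γ : ℝ) (bary : FinProb X → X) : Prop :=
  IsBarycenterMap bary ∧
    ∀ μ ν : FinProb X, dist (bary μ) (bary ν) ≤ Γ * wassersteinDist p μ ν

/-- `X` is `p`-barycentric with constant `K` via the map `bary`. -/
def IsPBarycentric {X : Type*} [MetricSpace X] (p K : ℝ) (bary : FinProb X → X) : Prop :=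
  ∀ (x : X) (μ : FinProb X),
    dist x (bary μ) ^ p + K ^ (-p) * (μ.exp fun y => dist (bary μ) y ^ p)
      ≤ μ.exp fun y => dist x y ^ p

/-- A (possibly rectangular) matrix is stochastic if it has nonnegative entries and
each row sums to `1`. -/
def IsStochastic {n m : ℕ} (A : Matrix (Fin n) (Fin m) ℝ) : Prop :=
  (∀ i j, 0 ≤ A i j) ∧ ∀ i, ∑ j, A i j = 1

/-- `A` is reversible relative to the probability vector `π`. -/
def IsReversible {n : ℕ} (A : Matrix (Fin n) (Fin n) ℝ) (π : Fin n → ℝ) : Prop :=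
  ∀ i j, π i * A i j = π j * A j i

/-- `π` is a probability vector. -/
def IsProbVec {n : ℕ} (π : Fin n → ℝ) : Prop :=
  (∀ i, 0 ≤ π i) ∧ ∑ i, π i = 1

/-- The Cesàro average `𝒜_t(A) = (1/t) ∑_{s=1}^t A^s`. -/
def cesaro {n : ℕ} (A : Matrix (Fin n) (Fin n) ℝ) (t : ℕ) : Matrix (Fin n) (Fin n) ℝ :=
  (t : ℝ)⁻¹ • ∑ s ∈ Finset.Icc 1 t, A ^ s

/-- `X` has Markov type `p` with constant `M`. -/
def HasMarkovType (X : Type*) [MetricSpace X] (p M : ℝ) : Prop :=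
  ∀ (n t : ℕ), 0 < n → 0 < t → ∀ (π : Fin n → ℝ) (A : Matrix (Fin n) (Fin n) ℝ),
    IsProbVec π → IsStochastic A → IsReversible A π → ∀ x : Fin n → X,
      ∑ i, ∑ j, π i * (A ^ t) i j * dist (x i) (x j) ^ p ≤
        M ^ p * t * ∑ i, ∑ j, π i * A i j * dist (x i) (x j) ^ p

/-- `X` has metric Markov cotype `p` with constant `N`. -/
def HasMetricMarkovCotype (X : Type*) [MetricSpace X] (p N : ℝ) : Prop :=
  ∀ (n t : ℕ), 0 < n → 0 < t → ∀ (π : Fin n → ℝ) (A : Matrix (Fin n) (Fin n) ℝ),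
    IsProbVec π → IsStochastic A → IsReversible A π → ∀ x : Fin n → X,
      ∃ y : Fin n → X,
        (∑ i, π i * dist (x i) (y i) ^ p) +
          t * ∑ i, ∑ j, π i * A i j * dist (y i) (y j) ^ p ≤
        N ^ p * ∑ i, ∑ j, π i * cesaro A t i j * dist (x i) (x j) ^ p

/-- The Markov type `p` constant `M_p(X)`. -/
def markovTypeConst (X : Type*) [MetricSpace X] (p : ℝ) : ℝ :=
  sInf {M : ℝ | 0 < M ∧ HasMarkovType X p M}

/-- The metric Markov cotype `p` constant `N_p(X)`. -/
def markovCotypeConst (X : Type*) [MetricSpace X] (p : ℝ) : ℝ :=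
  sInf {N : ℝ | 0 < N ∧ HasMetricMarkovCotype X p N}

/-- The nonlinear spectral gap quantity `γ₊(A, d_X^p)`. -/
def gammaPlus (X : Type*) [MetricSpace X] {n : ℕ} (A : Matrix (Fin n) (Fin n) ℝ)
    (p : ℝ) : ℝ≥0∞ :=
  sInf {g : ℝ≥0∞ | ∀ x y : Fin n → X,
    ENNReal.ofReal (((n : ℝ) ^ 2)⁻¹ * ∑ i, ∑ j, dist (x i) (y j) ^ p) ≤
      (g / (n : ℝ≥0∞)) * ENNReal.ofReal (∑ i, ∑ j, A i j * dist (x i) (y j) ^ p)}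

/-- The metric of `L_p^n(X)`. -/
def dLpn {X : Type*} [MetricSpace X] (p : ℝ) {n : ℕ} (f g : Fin n → X) : ℝ :=
  ((n : ℝ)⁻¹ * ∑ i, dist (f i) (g i) ^ p) ^ p⁻¹

/-- The barycenter `B(f) = B((1/n) ∑ δ_{f(i)})` of `f : Fin n → X`. -/
def baryFun {X : Type*} [MetricSpace X] (bary : FinProb X → X) {n : ℕ} (hn : 0 < n)
    (f : Fin n → X) : X :=
  bary (FinProb.mixN (fun _ : Fin n => 1) f (fun _ => zero_le_one)
    (by
      simp only [Finset.sum_const, Finset.card_univ, Fintype.card_fin, nsmul_eq_mul, mul_one]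
      exact_mod_cast hn))

/-- The nonlinear action `(A ⊗ I_X^n)(f)(i) = B(∑_j a_{ij} δ_{f(j)})`. -/
def matAct {X : Type*} [MetricSpace X] (bary : FinProb X → X) {n : ℕ}
    (A : Matrix (Fin n) (Fin n) ℝ) (hA : IsStochastic A) (f : Fin n → X) : Fin n → X :=
  fun i => bary (FinProb.mix (fun j => A i j) f (fun j => hA.1 i j) (hA.2 i))

/-- The quantity `λ_p(T)`. -/
def lambdaP {X : Type*} [MetricSpace X] (p : ℝ) {n : ℕ} (hn : 0 < n)
    (bary : FinProb X → X) (T : (Fin n → X) → (Fin n → X)) : ℝ≥0∞ :=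
  sInf {l : ℝ≥0∞ | ∀ f : Fin n → X,
    ENNReal.ofReal (dLpn p (T f) (fun _ => baryFun bary hn (T f))) ≤
      l * ENNReal.ofReal (dLpn p f (fun _ => baryFun bary hn f))}

/-- A finite σ-algebra on a finite set `Ω`, described by its atoms. -/
structure FinPartition (Ω : Type*) [Fintype Ω] where
  atom : Ω → Finset Ω
  mem_atom : ∀ ω, ω ∈ atom ω
  atom_eq : ∀ ω ω', ω' ∈ atom ω → atom ω' = atom ω

/-- The conditional barycenter `B(Z | F)`. -/
def condBary {Ω X : Type*} [Fintype Ω] (bary : FinProb X → X)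
    (μ : Ω → ℝ) (hμ : ∀ ω, 0 < μ ω) (F : FinPartition Ω) (Z : Ω → X) : Ω → X :=
  fun ω => bary (FinProb.mixN (fun a : {a // a ∈ F.atom ω} => μ a) (fun a => Z a)
    (fun a => (hμ a).le)
    (Finset.sum_pos (fun a _ => hμ a) ⟨⟨ω, F.mem_atom ω⟩, Finset.mem_univ _⟩))

/-!
Consider the matrices `(d_Y(Φ x_i, Φ x_j)^p)_{ij}` of all admissible `Φ` (those agreeing with `f`)
inside `ℝ^{n×n}`. If their convex hull missed the open box below `(K d_X(x_i, x_j))^p`,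
`K = (1+ε)ΛL`, a separating functional would be a nonnegative weighting `H`, and the hypothesis
applied to `H` would produce an admissible `Φ` on the wrong side. So some average
`∑_k w_k d_Y(Φ_k x_i, Φ_k x_j)^p` is at most `(K d_X(x_i, x_j))^p`, and
`F x_i := B(∑_k w_k δ_{Φ_k x_i})` works: the diagonal coupling bounds the Wasserstein distance
by that average, and the barycenter map costs a factor `Γ`. When `L = 0` the all-ones weighting
already forces an admissible `Φ` to be constant.
-/

theorem FinProb.ext {X : Type*} {μ ν : FinProb X} (h : μ.w = ν.w) : μ = ν := by
  cases μ; cases ν; simpa using h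

theorem Finsupp.sum_univ_sum_single_index {ι X R M : Type*} [Fintype ι] [AddCommMonoid R]
    [AddCommMonoid M] (a : ι → X) (r : ι → R) {g : X → R → M} (h0 : ∀ x, g x 0 = 0)
    (hadd : ∀ x r₁ r₂, g x (r₁ + r₂) = g x r₁ + g x r₂) :
    (∑ i, Finsupp.single (a i) (r i)).sum g = ∑ i, g (a i) (r i) := by
  rw [← Finsupp.sum_finsetSum_index h0 hadd]
  exact Finset.sum_congr rfl fun i _ => Finsupp.sum_single_index (h0 _)

namespace FinProb

variable {ι X : Type*} [Fintype ι] (w : ι → ℝ) (hw : ∀ i, 0 ≤ w i) (h1 : ∑ i, w i = 1)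

theorem exp_mix (a : ι → X) (g : X → ℝ) : (mix w a hw h1).exp g = ∑ i, w i * g (a i) :=
  Finsupp.sum_univ_sum_single_index a w (fun _ => zero_mul _) fun _ _ _ => add_mul _ _ _

theorem mix_eq_dirac {a : ι → X} {y : X} (ha : ∀ i, a i = y) : mix w a hw h1 = dirac y := by
  refine FinProb.ext ?_
  change ∑ i, Finsupp.single (a i) (w i) = Finsupp.single y 1
  simp only [ha, ← Finsupp.single_finsetSum, h1]

theorem sum_mix_ite_eq {X' : Type*} (g : X → X') (a : ι → X) (y : X') :
    ((mix w a hw h1).w.sum fun x r => if g x = y then r else 0) = (mix w (g ∘ a) hw h1).w y := by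
  change (∑ i, Finsupp.single (a i) (w i)).sum _ = (∑ i, Finsupp.single (g (a i)) (w i)) y
  rw [Finsupp.sum_univ_sum_single_index _ _ (fun _ => by simp) fun _ _ _ => by split <;> simp,
    Finset.sum_apply']
  simp only [Finsupp.single_apply]

end FinProb

section Barycentric

variable {Y ι : Type*} [MetricSpace Y] [Fintype ι] {p : ℝ}
  (w : ι → ℝ) (hw : ∀ i, 0 ≤ w i) (h1 : ∑ i, w i = 1)

-- witnessed by the diagonal coupling `∑ i, w i • δ_{(a i, b i)}`
theorem wassersteinDist_mix_le (a b : ι → Y) :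
    wassersteinDist p (FinProb.mix w a hw h1) (FinProb.mix w b hw h1) ≤
      (∑ i, w i * dist (a i) (b i) ^ p) ^ p⁻¹ := by
  refine csInf_le ⟨0, ?_⟩ ⟨FinProb.mix w (fun i => (a i, b i)) hw h1, ⟨?_, ?_⟩, ?_⟩
  · rintro c ⟨π, -, rfl⟩
    refine Real.rpow_nonneg (Finset.sum_nonneg fun q _ => ?_) _
    exact mul_nonneg (π.nonneg q) (Real.rpow_nonneg dist_nonneg p)
  · exact FinProb.sum_mix_ite_eq w hw h1 Prod.fst _
  · exact FinProb.sum_mix_ite_eq w hw h1 Prod.snd _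
  · rw [FinProb.exp_mix]

theorem IsWBarycentric.dist_mix_le {Γ : ℝ} {bary : FinProb Y → Y} (hW : IsWBarycentric p Γ bary)
    (hΓ : 0 ≤ Γ) (a b : ι → Y) :
    dist (bary (FinProb.mix w a hw h1)) (bary (FinProb.mix w b hw h1)) ≤
      Γ * (∑ i, w i * dist (a i) (b i) ^ p) ^ p⁻¹ :=
  (hW.2 _ _).trans (mul_le_mul_of_nonneg_left (wassersteinDist_mix_le w hw h1 a b) hΓ)

end Barycentric

section ConvexDuality

open Matrix

theorem exists_mem_convexHull_forall_lt {ι : Type*} [Fintype ι] {S : Set (ι → ℝ)}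
    (hS : S.Nonempty) {c : ι → ℝ}
    (h : ∀ w : ι → ℝ, 0 ≤ w → w ≠ 0 → ∃ s ∈ S, w ⬝ᵥ s < w ⬝ᵥ c) :
    ∃ D ∈ convexHull ℝ S, ∀ k, D k < c k := by
  set B : Set (ι → ℝ) := Set.univ.pi fun k => Set.Iio (c k)
  by_contra hD
  have hdisj : Disjoint B (convexHull ℝ S) :=
    Set.disjoint_left.2 fun D hDB hDS => hD ⟨D, hDS, fun k => hDB k (Set.mem_univ k)⟩
  obtain ⟨φ, u, hφB, hφS⟩ := geometric_hahn_banach_open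
    (convex_pi fun k _ => convex_Iio (c k)) (isOpen_set_pi Set.finite_univ fun k _ => isOpen_Iio)
    (convex_convexHull ℝ S) hdisj
  set w := (dotProductEquiv ℝ ι).symm φ.toLinearMap
  have hφ : ∀ v, φ v = w ⬝ᵥ v := fun v =>
    (LinearMap.congr_fun ((dotProductEquiv ℝ ι).apply_symm_apply φ.toLinearMap) v).symm
  have hc₁ : c - 1 ∈ B := fun k _ => by simp
  have hφc : φ c ≤ u := by
    have hcB : c ∈ closure B := by
      rw [closure_pi_set]
      exact fun k _ => by simp
    exact closure_minimal (t := {v | φ v ≤ u}) (fun v hv => (hφB v hv).le)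
      (isClosed_le φ.continuous continuous_const) hcB
  -- `φ` is bounded above on `B`, which is stable under lowering any coordinate
  have hw : 0 ≤ w := by
    intro k
    by_contra! hk
    replace hk : w k < 0 := hk
    set t := (u - φ (c - 1)) / -w k
    have ht : 0 ≤ t := div_nonneg (by linarith [hφB _ hc₁]) (by linarith)
    have htw : t * w k = φ (c - 1) - u := by
      rw [div_mul_eq_mul_div, div_neg, mul_div_cancel_right₀ _ hk.ne]; ring
    have hmem : c - 1 - t • Pi.single k 1 ∈ B := fun j _ => by
      have : 0 ≤ t * (Pi.single k 1 : ι → ℝ) j := by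
        rw [Pi.single_apply]; split <;> simp [ht]
      simp only [Set.mem_Iio, Pi.sub_apply, Pi.one_apply, Pi.smul_apply, smul_eq_mul]
      linarith
    have := hφB _ hmem
    rw [map_sub, map_smul, hφ (Pi.single k 1), dotProduct_single, smul_eq_mul, mul_one, htw] at this
    linarith
  have hw₀ : w ≠ 0 := by
    rintro hw₀
    obtain ⟨s, hs⟩ := hS
    have h₁ := hφB _ hc₁
    have h₂ := hφS s (subset_convexHull ℝ S hs)
    rw [hφ, hw₀, zero_dotProduct] at h₁ h₂
    linarith
  obtain ⟨s, hs, hlt⟩ := h w hw hw₀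
  have := hφS s (subset_convexHull ℝ S hs)
  rw [hφ] at this hφc
  linarith

theorem sum_sum_add_swap_mul {V : Type*} [Fintype V] (w : V × V → ℝ) {g : V → V → ℝ}
    (hg : ∀ i j, g i j = g j i) :
    ∑ i, ∑ j, (w (i, j) + w (j, i)) * g i j = 2 * (w ⬝ᵥ fun q => g q.1 q.2) := by
  have hswap : ∑ i, ∑ j, w (j, i) * g i j = ∑ i, ∑ j, w (i, j) * g i j := by
    rw [Finset.sum_comm]
    exact Finset.sum_congr rfl fun i _ => Finset.sum_congr rfl fun j _ => by rw [hg]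
  simp only [add_mul, Finset.sum_add_distrib, hswap, dotProduct, Fintype.sum_prod_type]
  ring

theorem exists_convexCombination_sum_dist_rpow_le {V X Y : Type*} [Fintype V] [MetricSpace X]
    [MetricSpace Y] {p α β : ℝ} (hp : 0 < p) (hα : 0 ≤ α) (hαβ : α < β) {x : V → X}
    (hx : Function.Injective x) (P : (V → Y) → Prop)
    (hH : ∀ H : Matrix V V ℝ, H.IsSymm → (∀ i j, 0 ≤ H i j) → ∃ Φ, P Φ ∧
      ∑ i, ∑ j, H i j * dist (Φ i) (Φ j) ^ p ≤ α * ∑ i, ∑ j, H i j * dist (x i) (x j) ^ p) :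
    ∃ (ι : Type) (_ : Fintype ι) (w : ι → ℝ) (Φ : ι → V → Y), (∀ k, 0 ≤ w k) ∧ ∑ k, w k = 1 ∧
      (∀ k, P (Φ k)) ∧ ∀ i j, ∑ k, w k * dist (Φ k i) (Φ k j) ^ p ≤ β * dist (x i) (x j) ^ p := by
  -- `e` is made positive on the diagonal, where the bound to be reached holds anyway, so that
  -- every nonzero weighting charges it
  set e : V × V → ℝ := fun q => if q.1 = q.2 then 1 else dist (x q.1) (x q.2) ^ p
  have he : ∀ q, 0 < e q := fun q => by
    by_cases hq : q.1 = q.2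
    · simp [e, hq]
    · simpa [e, hq] using Real.rpow_pos_of_pos (dist_pos.2 (hx.ne hq)) p
  have hdist_le : ∀ q, dist (x q.1) (x q.2) ^ p ≤ e q := fun q => by
    by_cases hq : q.1 = q.2
    · simp [e, hq, Real.zero_rpow hp.ne']
    · simp [e, hq]
  set S : Set (V × V → ℝ) := {s | ∃ Φ, P Φ ∧ s = fun q => dist (Φ q.1) (Φ q.2) ^ p}
  have hS : S.Nonempty := by
    obtain ⟨Φ, hΦ, -⟩ := hH 0 isSymm_zero fun _ _ => le_rfl
    exact ⟨_, Φ, hΦ, rfl⟩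
  obtain ⟨D, hDS, hD⟩ := exists_mem_convexHull_forall_lt hS (c := β • e) fun w hw hw₀ => by
    obtain ⟨Φ, hΦ, hΦH⟩ := hH (Matrix.of fun i j => w (i, j) + w (j, i))
      (IsSymm.ext fun i j => add_comm _ _) fun i j => add_nonneg (hw _) (hw _)
    simp only [Matrix.of_apply] at hΦH
    rw [sum_sum_add_swap_mul w (g := fun i j => dist (Φ i) (Φ j) ^ p) fun i j => by rw [dist_comm],
      sum_sum_add_swap_mul w (g := fun i j => dist (x i) (x j) ^ p) fun i j => by rw [dist_comm]]
      at hΦH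
    have hwe : 0 < w ⬝ᵥ e := by
      obtain ⟨q, hq⟩ := Function.ne_iff.1 hw₀
      exact Finset.sum_pos' (fun q _ => mul_nonneg (hw q) (he q).le)
        ⟨q, Finset.mem_univ q, mul_pos (lt_of_le_of_ne (hw q) (Ne.symm hq)) (he q)⟩
    refine ⟨_, ⟨Φ, hΦ, rfl⟩, ?_⟩
    calc w ⬝ᵥ (fun q => dist (Φ q.1) (Φ q.2) ^ p)
        ≤ α * (w ⬝ᵥ fun q => dist (x q.1) (x q.2) ^ p) := by linarith
      _ ≤ α * (w ⬝ᵥ e) := mul_le_mul_of_nonneg_left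
          (Finset.sum_le_sum fun q _ => mul_le_mul_of_nonneg_left (hdist_le q) (hw q)) hα
      _ < β * (w ⬝ᵥ e) := mul_lt_mul_of_pos_right hαβ hwe
      _ = w ⬝ᵥ (β • e) := (dotProduct_smul β w e).symm
  obtain ⟨ι, _, t, s, ht₀, ht₁, hsS, rfl⟩ := mem_convexHull_iff_exists_fintype.1 hDS
  choose Φ hΦ hsΦ using hsS
  refine ⟨ι, _, t, Φ, ht₀, ht₁, hΦ, fun i j => ?_⟩
  rcases eq_or_ne i j with rfl | hij
  · simp [Real.zero_rpow hp.ne']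
  · simpa [hsΦ, e, hij, Finset.sum_apply] using (hD (i, j)).le

end ConvexDuality

theorem dist_eq_zero_of_sum_sum_dist_rpow_nonpos {V Y : Type*} [Fintype V] [PseudoMetricSpace Y]
    {p : ℝ} (hp : p ≠ 0) {Φ : V → Y} (h : ∑ i, ∑ j, dist (Φ i) (Φ j) ^ p ≤ 0) (i j : V) :
    dist (Φ i) (Φ j) = 0 := by
  have hnn : ∀ i j, 0 ≤ dist (Φ i) (Φ j) ^ p := fun _ _ => Real.rpow_nonneg dist_nonneg p
  have hrow := Finset.sum_eq_zero_iff_of_nonneg (fun i _ => Finset.sum_nonneg fun j _ => hnn i j)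
    |>.1 (le_antisymm h (Finset.sum_nonneg fun i _ => Finset.sum_nonneg fun j _ => hnn i j))
    i (Finset.mem_univ i)
  have hij := Finset.sum_eq_zero_iff_of_nonneg (fun j _ => hnn i j) |>.1 hrow j (Finset.mem_univ j)
  exact (Real.rpow_eq_zero dist_nonneg hp).1 hij

theorem statement17_general (p Λ Γ : ℝ) (hp : 1 ≤ p) (hΛ : 1 ≤ Λ) (hΓ : 1 ≤ Γ)
    (n : ℕ) (ε : ℝ) (hε0 : 0 < ε)
    (X : Type*) [MetricSpace X] (Y : Type*) [MetricSpace Y]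
    (bary : FinProb Y → Y) (hW : IsWBarycentric p Γ bary)
    (Z : Set X) (f : Z → Y) (Lf : ℝ) (hLf0 : 0 ≤ Lf)
    (x : Fin n → X) (hx : Function.Injective x)
    (hH : ∀ H : Matrix (Fin n) (Fin n) ℝ, H.IsSymm → (∀ i j, 0 ≤ H i j) →
      ∃ Φ : Fin n → Y, (∀ (i : Fin n) (h : x i ∈ Z), Φ i = f ⟨x i, h⟩) ∧
        ∑ i, ∑ j, H i j * dist (Φ i) (Φ j) ^ p ≤
          Λ ^ p * Lf ^ p * ∑ i, ∑ j, H i j * dist (x i) (x j) ^ p) :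
    ∃ F : Fin n → Y, (∀ (i : Fin n) (h : x i ∈ Z), F i = f ⟨x i, h⟩) ∧
      ∀ i j, dist (F i) (F j) ≤ (1 + ε) * Γ * Λ * Lf * dist (x i) (x j) := by
  have hp₀ : 0 < p := by linarith
  rcases hLf0.eq_or_lt with rfl | hLf
  · obtain ⟨Φ, hΦZ, hΦ⟩ := hH (Matrix.of fun _ _ => 1) (Matrix.IsSymm.ext fun _ _ => rfl)
      fun _ _ => zero_le_one
    refine ⟨Φ, hΦZ, fun i j => ?_⟩
    rw [dist_eq_zero_of_sum_sum_dist_rpow_nonpos hp₀.ne'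
      (by simpa [Real.zero_rpow hp₀.ne'] using hΦ) i j]
    simp
  set K := (1 + ε) * Λ * Lf
  have hK : 0 ≤ K := by positivity
  have hΛLf : Λ ^ p * Lf ^ p < K ^ p := by
    rw [← Real.mul_rpow (by linarith) hLf0]
    exact Real.rpow_lt_rpow (by positivity) (by nlinarith [mul_pos (by linarith : 0 < Λ) hLf]) hp₀
  obtain ⟨ι, _, w, Φ, hw₀, hw₁, hΦZ, hΦ⟩ := exists_convexCombination_sum_dist_rpow_le hp₀
    (by positivity) hΛLf hx (fun Φ => ∀ (i : Fin n) (h : x i ∈ Z), Φ i = f ⟨x i, h⟩) hH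
  refine ⟨fun i => bary (FinProb.mix w (fun k => Φ k i) hw₀ hw₁), fun i hi => ?_, fun i j => ?_⟩
  · exact (congrArg bary (FinProb.mix_eq_dirac w hw₀ hw₁ fun k => hΦZ k i hi)).trans (hW.1 _)
  calc _ ≤ Γ * (∑ k, w k * dist (Φ k i) (Φ k j) ^ p) ^ p⁻¹ :=
        hW.dist_mix_le w hw₀ hw₁ (by linarith) _ _
    _ ≤ Γ * (K ^ p * dist (x i) (x j) ^ p) ^ p⁻¹ := by
        gcongr
        · exact Finset.sum_nonneg fun k _ => mul_nonneg (hw₀ k) (Real.rpow_nonneg dist_nonneg p)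
        · exact hΦ i j
    _ = (1 + ε) * Γ * Λ * Lf * dist (x i) (x j) := by
        rw [← Real.mul_rpow hK dist_nonneg, Real.rpow_rpow_inv (by positivity) hp₀.ne']
        ring

theorem statement17 (p Λ Γ : ℝ) (hp : 1 ≤ p) (hΛ : 1 ≤ Λ) (hΓ : 1 ≤ Γ)
    (n : ℕ) (hn : 0 < n) (ε : ℝ) (hε0 : 0 < ε) (hε1 : ε < 1)
    (X : Type*) [MetricSpace X] (Y : Type*) [MetricSpace Y]
    (bary : FinProb Y → Y) (hW : IsWBarycentric p Γ bary)
    (Z : Set X) (f : Z → Y) (Lf : ℝ) (hLf0 : 0 ≤ Lf)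
    (hf : ∀ u v : Z, dist (f u) (f v) ≤ Lf * dist (u : X) (v : X))
    (x : Fin n → X) (hx : Function.Injective x)
    (hH : ∀ H : Matrix (Fin n) (Fin n) ℝ, H.IsSymm → (∀ i j, 0 ≤ H i j) →
      ∃ Φ : Fin n → Y, (∀ (i : Fin n) (h : x i ∈ Z), Φ i = f ⟨x i, h⟩) ∧
        ∑ i, ∑ j, H i j * dist (Φ i) (Φ j) ^ p ≤
          Λ ^ p * Lf ^ p * ∑ i, ∑ j, H i j * dist (x i) (x j) ^ p) :
    ∃ F : Fin n → Y, (∀ (i : Fin n) (h : x i ∈ Z), F i = f ⟨x i, h⟩) ∧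
      ∀ i j, dist (F i) (F j) ≤ (1 + ε) * Γ * Λ * Lf * dist (x i) (x j) :=
  statement17_general p Λ Γ hp hΛ hΓ n ε hε0 X Y bary hW Z f Lf hLf0 x hx hH
end
end

section
/- For every p ∈ (0,2), the real line ℝ equipped with the standard metric d(x,y) = |x−y| fails to have metric Markov cotype p. That is, for every N ∈ (0,∞) there exist n,t ∈ ℕ, a symmetric stochastic matrix A = (a_{ij}) ∈ M_n(ℝ), and x_1,…,x_n ∈ ℝ such that for all y_1,…,y_n ∈ ℝ the inequality (1/n) Σ_i |x_i−y_i|^p + (t/n) Σ_{i,j} a_{ij} |y_i−y_j|^p ≤ (N^p/n) Σ_{i,j} 𝒜_t(A)_{ij} |x_i−x_j|^p fails. -/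
open scoped BigOperators ENNReal
open scoped Classical

noncomputable section

open Finset Filter Matrix Fin.NatCast

/-!
Let `A` be the simple random walk on the cycle of length `n = 2m` and `x` the graph distance
to `0`. For `0 ≤ a ≤ m` one step of the walk raises the average of `(a - x)²` by at most `1`,
so after `s ≤ t` steps `x` has moved by at most `√t` in mean square, and by Jensen the
right-hand side is at most `N^p t^{p/2}`. On the other side, for `a < m/4` the points `a` and
`m - a` are more than `m/2` apart under `x`; hence `|x - y|` at one of them, or the total
variation of `y` around the cycle, is at least `m/6`. Once `t ≥ n^{max(p,1)}` the power mean
inequality bounds the `p`-th power of the total variation by the energy term, so the left-hand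
side is `≳ n^p`. As `max(p,1) p / 2 < p` for `p < 2`, the inequality fails for `n` large.
-/

lemma Fin.val_add_one_eq_ite {n : ℕ} [NeZero n] (k : Fin n) :
    (k + 1).val = if k.val + 1 = n then 0 else k.val + 1 := by
  rcases Nat.lt_or_ge 1 n with hn | hn
  · rw [Fin.val_add, Fin.val_one', Nat.mod_eq_of_lt hn]
    split_ifs with h
    · rw [h, Nat.mod_self]
    · exact Nat.mod_eq_of_lt (by omega)
  · obtain rfl : n = 1 := by have := NeZero.pos n; omega
    simp [Fin.val_eq_zero]

lemma Fin.val_sub_one_eq_ite {n : ℕ} [NeZero n] (k : Fin n) :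
    (k - 1).val = if k.val = 0 then n - 1 else k.val - 1 := by
  rcases Nat.lt_or_ge 1 n with hn | hn
  · rw [Fin.sub_def]
    simp only [Fin.val_one', Nat.mod_eq_of_lt hn]
    split_ifs with h
    · rw [h, Nat.add_zero]
      exact Nat.mod_eq_of_lt (by omega)
    · rw [show n - 1 + k.val = k.val - 1 + n by omega, Nat.add_mod_right]
      exact Nat.mod_eq_of_lt (by omega)
  · obtain rfl : n = 1 := by have := NeZero.pos n; omega
    simp [Fin.val_eq_zero]

lemma abs_sub_le_sum_abs_sub_add_one {n : ℕ} [NeZero n] (y : Fin n → ℝ) (i j : Fin n) :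
    |y j - y i| ≤ ∑ k, |y k - y (k + 1)| := by
  set g : Fin n → ℝ := fun k => y (k + 1) - y k
  have htel : ∀ d : ℕ, y (i + d) - y i = ∑ l ∈ range d, g (i + l) := fun d => by
    have := sum_range_sub (fun l : ℕ => y (i + l)) d
    simp only [Nat.cast_succ, Nat.cast_zero, add_zero, ← add_assoc] at this
    exact this.symm
  have hj : i + ((j - i).val : Fin n) = j := by rw [Fin.cast_val_eq_self, add_sub_cancel]
  calc |y j - y i| = |∑ l ∈ range (j - i).val, g (i + l)| := by rw [← htel, hj]
    _ ≤ ∑ l ∈ range (j - i).val, |g (i + l)| := abs_sum_le_sum_abs _ _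
    _ ≤ ∑ l ∈ range n, |g (i + l)| :=
        sum_le_sum_of_subset_of_nonneg (range_subset_range.2 (j - i).isLt.le)
          fun _ _ _ => abs_nonneg _
    _ = ∑ k, |g (i + k)| := by
        rw [← Fin.sum_univ_eq_sum_range (fun l : ℕ => |g (i + l)|)]
        simp only [Fin.cast_val_eq_self]
    _ = ∑ k, |g k| := Equiv.sum_comp (Equiv.addLeft i) fun k => |g k|
    _ = ∑ k, |y k - y (k + 1)| := by simp only [g, abs_sub_comm]

lemma sum_comp_natCast_le_sum {n : ℕ} [NeZero n] {f : Fin n → ℝ} (hf : ∀ i, 0 ≤ f i)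
    {s : Finset ℕ} {g : ℕ → ℕ} (hg : ∀ a ∈ s, g a < n) (hinj : Set.InjOn g s) :
    ∑ a ∈ s, f (g a) ≤ ∑ i, f i := by
  rw [← sum_image (g := fun a => (g a : Fin n)) fun a ha b hb h => hinj ha hb <| by
    simpa [Fin.val_cast_of_lt (hg a ha), Fin.val_cast_of_lt (hg b hb)] using congrArg Fin.val h]
  exact sum_le_sum_of_subset_of_nonneg (subset_univ _) fun i _ _ => hf i

lemma rpow_sum_le_sum_rpow {ι : Type*} (s : Finset ι) {f : ι → ℝ} (hf : ∀ i ∈ s, 0 ≤ f i)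
    {p : ℝ} (hp₀ : 0 < p) (hp₁ : p ≤ 1) : (∑ i ∈ s, f i) ^ p ≤ ∑ i ∈ s, f i ^ p := by
  induction s using Finset.cons_induction with
  | empty => simp [Real.zero_rpow hp₀.ne']
  | cons a s ha ih =>
    rw [sum_cons, sum_cons]
    have hs := (forall_mem_cons ha _).1 hf
    grw [Real.rpow_add_le_add_rpow hs.1 (sum_nonneg hs.2) hp₀.le hp₁, ih hs.2]

lemma rpow_sum_le_card_rpow_mul_sum_rpow {ι : Type*} (s : Finset ι) {f : ι → ℝ}
    (hf : ∀ i ∈ s, 0 ≤ f i) {p : ℝ} (hp : 0 < p) :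
    (∑ i ∈ s, f i) ^ p ≤ (#s : ℝ) ^ (max p 1 - 1) * ∑ i ∈ s, f i ^ p := by
  rcases le_total p 1 with hp₁ | hp₁
  · simpa [max_eq_right hp₁] using rpow_sum_le_sum_rpow s hf hp hp₁
  · rw [max_eq_left hp₁]
    exact Real.rpow_sum_le_const_mul_sum_rpow_of_nonneg s hp₁ hf

lemma rpow_le_add_rpow_add_rpow {c u v w p : ℝ} (hc : 0 ≤ c) (hu : 0 ≤ u) (hv : 0 ≤ v)
    (hw : 0 ≤ w) (hp : 0 ≤ p) (h : 3 * c ≤ u + v + w) : c ^ p ≤ u ^ p + v ^ p + w ^ p := by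
  have hu' := Real.rpow_nonneg hu p
  have hv' := Real.rpow_nonneg hv p
  have hw' := Real.rpow_nonneg hw p
  have : c ≤ u ∨ c ≤ v ∨ c ≤ w := by by_contra! h'; linarith
  rcases this with h | h | h <;> linarith [Real.rpow_le_rpow hc h hp]

lemma sum_mul_abs_rpow_le {ι : Type*} {s : Finset ι} {w d : ι → ℝ} (hw : ∀ j ∈ s, 0 ≤ w j)
    (hw₁ : ∑ j ∈ s, w j = 1) {p : ℝ} (hp₀ : 0 ≤ p) (hp₂ : p ≤ 2) :
    ∑ j ∈ s, w j * |d j| ^ p ≤ (∑ j ∈ s, w j * d j ^ 2) ^ (p / 2) := by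
  have hsq : ∀ j, |d j| ^ p = (d j ^ 2) ^ (p / 2) := fun j => by
    rw [← sq_abs, ← Real.rpow_natCast, ← Real.rpow_mul (abs_nonneg _)]
    ring_nf
  simp only [hsq]
  exact (Real.concaveOn_rpow (by linarith) (by linarith)).le_map_sum hw hw₁
    fun j _ => sq_nonneg (d j)

lemma natCeil_rpow_le {x r : ℝ} (hx : 1 ≤ x) (hr₀ : 0 ≤ r) (hr₁ : r ≤ 1) :
    (⌈x⌉₊ : ℝ) ^ r ≤ 2 * x ^ r :=
  calc (⌈x⌉₊ : ℝ) ^ r ≤ (2 * x) ^ r := by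
        gcongr
        linarith [Nat.ceil_lt_add_one (by linarith : 0 ≤ x)]
    _ = 2 ^ r * x ^ r := Real.mul_rpow zero_le_two (by linarith)
    _ ≤ 2 * x ^ r := by
        gcongr
        simpa using Real.rpow_le_rpow_of_exponent_le one_le_two hr₁

lemma eventually_mul_rpow_lt_rpow (C : ℝ) {a b : ℝ} (hab : a < b) :
    ∀ᶠ x : ℝ in atTop, C * x ^ a < x ^ b := by
  filter_upwards [(tendsto_rpow_atTop (sub_pos.2 hab)).eventually_gt_atTop C,
    eventually_gt_atTop 0] with x hC hx
  calc C * x ^ a < x ^ (b - a) * x ^ a := by gcongr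
    _ = x ^ b := by rw [← Real.rpow_add hx, sub_add_cancel]

lemma Matrix.mulVec_pow_le_of_mulVec_le {ι : Type*} [Fintype ι] [DecidableEq ι]
    {A : Matrix ι ι ℝ} (hA : A ∈ rowStochastic ℝ ι) {φ : ι → ℝ} {c : ℝ}
    (hφ : ∀ k, (A *ᵥ φ) k ≤ φ k + c) (s : ℕ) (i : ι) :
    (A ^ s *ᵥ φ) i ≤ φ i + s * c := by
  induction s generalizing i with
  | zero => simp
  | succ s ih =>
    have hAs := pow_mem hA s
    calc (A ^ (s + 1) *ᵥ φ) i = ∑ k, (A ^ s) i k * (A *ᵥ φ) k := by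
          rw [pow_succ, ← mulVec_mulVec]
          rfl
      _ ≤ ∑ k, (A ^ s) i k * (φ k + c) :=
          sum_le_sum fun k _ => mul_le_mul_of_nonneg_left (hφ k)
            (nonneg_of_mem_rowStochastic hAs)
      _ = (A ^ s *ᵥ φ) i + c := by
          simp only [mul_add, sum_add_distrib, ← sum_mul, sum_row_of_mem_rowStochastic hAs,
            one_mul]
          rfl
      _ ≤ φ i + (s + 1 : ℕ) * c := by
          push_cast
          linarith [ih i]

lemma isStochastic_iff_mem_rowStochastic {n : ℕ} {A : Matrix (Fin n) (Fin n) ℝ} :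
    IsStochastic A ↔ A ∈ rowStochastic ℝ (Fin n) :=
  mem_rowStochastic_iff_sum.symm

lemma cesaro_eq_sum {n : ℕ} (A : Matrix (Fin n) (Fin n) ℝ) (t : ℕ) :
    cesaro A t = ∑ s ∈ Icc 1 t, (t : ℝ)⁻¹ • A ^ s := by
  rw [cesaro, smul_sum]

lemma cesaro_mem_rowStochastic {n t : ℕ} {A : Matrix (Fin n) (Fin n) ℝ}
    (hA : A ∈ rowStochastic ℝ (Fin n)) (ht : 0 < t) : cesaro A t ∈ rowStochastic ℝ (Fin n) := by
  rw [cesaro_eq_sum]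
  refine convex_rowStochastic.sum_mem (fun _ _ => by positivity) ?_ fun s _ => pow_mem hA s
  rw [sum_const, Nat.card_Icc, Nat.add_sub_cancel, nsmul_eq_mul]
  field_simp

lemma cesaro_mulVec_le_of_mulVec_le {n t : ℕ} {A : Matrix (Fin n) (Fin n) ℝ}
    (hA : A ∈ rowStochastic ℝ (Fin n)) (ht : 0 < t) {φ : Fin n → ℝ} {c : ℝ} (hc : 0 ≤ c)
    (hφ : ∀ k, (A *ᵥ φ) k ≤ φ k + c) (i : Fin n) :
    (cesaro A t *ᵥ φ) i ≤ φ i + t * c := by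
  have hterm : ∀ s ∈ Icc 1 t, (t : ℝ)⁻¹ * (A ^ s *ᵥ φ) i ≤ (t : ℝ)⁻¹ * (φ i + t * c) := by
    intro s hs
    have hst : (s : ℝ) ≤ t := by exact_mod_cast (mem_Icc.1 hs).2
    grw [mulVec_pow_le_of_mulVec_le hA hφ s i, hst]
  calc (cesaro A t *ᵥ φ) i = ∑ s ∈ Icc 1 t, (t : ℝ)⁻¹ * (A ^ s *ᵥ φ) i := by
        simp [cesaro_eq_sum, sum_mulVec, smul_mulVec]
    _ ≤ ∑ s ∈ Icc 1 t, (t : ℝ)⁻¹ * (φ i + t * c) := sum_le_sum hterm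
    _ = φ i + t * c := by
        rw [sum_const, Nat.card_Icc, Nat.add_sub_cancel, nsmul_eq_mul]
        field_simp

def cycleWalk (n : ℕ) [NeZero n] : Matrix (Fin n) (Fin n) ℝ :=
  Matrix.of fun i j => ((if j = i + 1 then 1 else 0) + (if j = i - 1 then 1 else 0)) / 2

section cycleWalk

variable {n : ℕ} [NeZero n]

lemma cycleWalk_mulVec (g : Fin n → ℝ) (i : Fin n) :
    (cycleWalk n *ᵥ g) i = (g (i + 1) + g (i - 1)) / 2 := by
  simp [cycleWalk, mulVec, dotProduct, add_mul, div_mul_eq_mul_div, ← sum_div, sum_add_distrib]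

lemma cycleWalk_mem_rowStochastic : cycleWalk n ∈ rowStochastic ℝ (Fin n) := by
  refine mem_rowStochastic.2
    ⟨fun i j => by simp only [cycleWalk, of_apply]; positivity, funext fun i => ?_⟩
  rw [cycleWalk_mulVec]
  norm_num

lemma cycleWalk_isSymm : (cycleWalk n).IsSymm :=
  IsSymm.ext fun i j => by
    simp only [cycleWalk, of_apply, eq_sub_iff_add_eq, eq_comm (a := i), eq_comm (b := j)]
    ring

lemma sum_sum_cycleWalk_mul {f : Fin n → Fin n → ℝ} (hf : ∀ i j, f i j = f j i) :
    ∑ i, ∑ j, cycleWalk n i j * f i j = ∑ i, f i (i + 1) := by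
  have hrow : ∀ i, ∑ j, cycleWalk n i j * f i j = (f i (i + 1) + f i (i - 1)) / 2 :=
    fun i => cycleWalk_mulVec (f i) i
  have hshift : ∑ i, f i (i - 1) = ∑ i, f i (i + 1) :=
    Fintype.sum_equiv (Equiv.subRight 1) _ _ fun i => by simp [hf i]
  simp only [hrow, ← sum_div, sum_add_distrib, hshift]
  ring

end cycleWalk

def sawtooth (m : ℕ) (i : Fin (2 * m)) : ℕ := min i.val (2 * m - i.val)

lemma sawtooth_le (m : ℕ) (i : Fin (2 * m)) : sawtooth m i ≤ m := by
  unfold sawtooth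
  omega

lemma sawtooth_natCast {m a : ℕ} [NeZero (2 * m)] (ha : a ≤ m) :
    sawtooth m (a : Fin (2 * m)) = a := by
  have := NeZero.pos (2 * m)
  have : ((a : Fin (2 * m)) : ℕ) = a := Fin.val_cast_of_lt (by omega)
  unfold sawtooth
  omega

lemma sawtooth_neighbors {m : ℕ} [NeZero (2 * m)] (k : Fin (2 * m)) :
    (sawtooth m (k + 1) = sawtooth m k + 1 ∧ sawtooth m (k - 1) + 1 = sawtooth m k) ∨
    (sawtooth m (k + 1) + 1 = sawtooth m k ∧ sawtooth m (k - 1) = sawtooth m k + 1) ∨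
    (sawtooth m k = 0 ∧ sawtooth m (k + 1) = 1 ∧ sawtooth m (k - 1) = 1) ∨
    (sawtooth m k = m ∧ sawtooth m (k + 1) + 1 = m ∧ sawtooth m (k - 1) + 1 = m) := by
  have hk := k.isLt
  simp only [sawtooth, Fin.val_add_one_eq_ite, Fin.val_sub_one_eq_ite]
  split_ifs <;> omega

/-- Away from the extremes of `sawtooth` this is an equality; at the minimum `0` and the
maximum `m` it needs `0 ≤ a ≤ m`. -/
lemma sawtooth_drift {m : ℕ} [NeZero (2 * m)] (k : Fin (2 * m)) {a : ℝ} (ha₀ : 0 ≤ a)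
    (ham : a ≤ m) :
    ((a - sawtooth m (k + 1)) ^ 2 + (a - sawtooth m (k - 1)) ^ 2) / 2 ≤
      (a - sawtooth m k) ^ 2 + 1 := by
  rcases sawtooth_neighbors k with ⟨h₁, h₂⟩ | ⟨h₁, h₂⟩ | ⟨h₀, h₁, h₂⟩ | ⟨h₀, h₁, h₂⟩
  · rify at h₁ h₂; nlinarith
  · rify at h₁ h₂; nlinarith
  · rify at h₀ h₁ h₂; nlinarith
  · rify at h₀ h₁ h₂; nlinarith

lemma sum_cesaro_cycleWalk_mul_abs_sub_sawtooth_rpow_le {m t : ℕ} [NeZero (2 * m)]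
    (ht : 0 < t) {p : ℝ} (hp₀ : 0 ≤ p) (hp₂ : p ≤ 2) (i : Fin (2 * m)) :
    ∑ j, cesaro (cycleWalk (2 * m)) t i j * |(sawtooth m i : ℝ) - sawtooth m j| ^ p ≤
      (t : ℝ) ^ (p / 2) := by
  have hW := cycleWalk_mem_rowStochastic (n := 2 * m)
  have hC := cesaro_mem_rowStochastic hW ht
  have hdrift : ∀ k, (cycleWalk (2 * m) *ᵥ fun j => ((sawtooth m i : ℝ) - sawtooth m j) ^ 2) k ≤
      ((sawtooth m i : ℝ) - sawtooth m k) ^ 2 + 1 := fun k => by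
    rw [cycleWalk_mulVec]
    exact sawtooth_drift k (Nat.cast_nonneg _) (by exact_mod_cast sawtooth_le m i)
  have hmoment :
      ∑ j, cesaro (cycleWalk (2 * m)) t i j * ((sawtooth m i : ℝ) - sawtooth m j) ^ 2 ≤ t := by
    simpa [mulVec, dotProduct] using cesaro_mulVec_le_of_mulVec_le hW ht zero_le_one hdrift i
  calc _ ≤ (∑ j, cesaro (cycleWalk (2 * m)) t i j * ((sawtooth m i : ℝ) - sawtooth m j) ^ 2)
        ^ (p / 2) :=
        sum_mul_abs_rpow_le (fun j _ => nonneg_of_mem_rowStochastic hC)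
          (sum_row_of_mem_rowStochastic hC i) hp₀ hp₂
    _ ≤ (t : ℝ) ^ (p / 2) :=
        Real.rpow_le_rpow (sum_nonneg fun j _ => mul_nonneg (nonneg_of_mem_rowStochastic hC)
          (sq_nonneg _)) hmoment (by positivity)

lemma mul_rpow_le_sum_abs_sawtooth_sub_rpow {m k : ℕ} [NeZero (2 * m)] (hk : 4 * k ≤ m)
    {p : ℝ} (hp : 0 ≤ p) (y : Fin (2 * m) → ℝ) :
    k * ((m : ℝ) / 6) ^ p ≤
      2 * ∑ i, |(sawtooth m i : ℝ) - y i| ^ p + k * (∑ i, |y i - y (i + 1)|) ^ p := by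
  set f : Fin (2 * m) → ℝ := fun i => |(sawtooth m i : ℝ) - y i| ^ p
  set V := ∑ i, |y i - y (i + 1)|
  have hf : ∀ i, 0 ≤ f i := fun i => Real.rpow_nonneg (abs_nonneg _) p
  have hpair : ∀ a ∈ range k, ((m : ℝ) / 6) ^ p ≤ f a + V ^ p + f (m - a : ℕ) := by
    intro a ha
    have ha' : 4 * a < m := by have := mem_range.1 ha; omega
    have hx₁ : (sawtooth m a : ℝ) = a := by rw [sawtooth_natCast (by omega)]
    have hx₂ : (sawtooth m (m - a : ℕ) : ℝ) = m - a := by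
      rw [sawtooth_natCast (by omega), Nat.cast_sub (by omega)]
    have hy := abs_sub_le_sum_abs_sub_add_one y (a : Fin (2 * m)) (m - a : ℕ)
    refine rpow_le_add_rpow_add_rpow (by positivity) (abs_nonneg _)
      (sum_nonneg fun _ _ => abs_nonneg _) (abs_nonneg _) hp ?_
    have ha'' : (4 * a : ℝ) < m := by exact_mod_cast ha'
    linarith [le_abs_self ((sawtooth m (m - a : ℕ) : ℝ) - y (m - a : ℕ)),
      le_abs_self (y (m - a : ℕ) - y a), neg_abs_le ((sawtooth m a : ℝ) - y a)]
  have hinj : Set.InjOn (fun a => m - a) (range k) := fun a ha b hb h => by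
    simp only [coe_range, Set.mem_Iio] at ha hb h
    omega
  calc k * ((m : ℝ) / 6) ^ p = ∑ a ∈ range k, ((m : ℝ) / 6) ^ p := by simp
    _ ≤ ∑ a ∈ range k, (f a + V ^ p + f (m - a : ℕ)) := sum_le_sum hpair
    _ = ∑ a ∈ range k, f a + k * V ^ p + ∑ a ∈ range k, f (m - a : ℕ) := by
        simp [sum_add_distrib]
    _ ≤ ∑ i, f i + k * V ^ p + ∑ i, f i := by
        gcongr
        · exact sum_comp_natCast_le_sum hf (g := id)
            (fun a ha => by simp only [mem_range, id] at ha ⊢; omega) (Set.injOn_id _)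
        · exact sum_comp_natCast_le_sum hf (fun a ha => by simp only [mem_range] at ha; omega) hinj
    _ = 2 * ∑ i, f i + k * V ^ p := by ring

lemma mul_rpow_le_cotype_lhs {m k t : ℕ} [NeZero (2 * m)] (hk : 4 * k ≤ m) {p : ℝ}
    (hp : 0 < p) (ht : ((2 * m : ℕ) : ℝ) ^ max p 1 ≤ t) (y : Fin (2 * m) → ℝ) :
    k * ((m : ℝ) / 6) ^ p ≤ 2 * (∑ i, |(sawtooth m i : ℝ) - y i| ^ p +
      t * ∑ i, ∑ j, cycleWalk (2 * m) i j * |y i - y j| ^ p) := by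
  rw [sum_sum_cycleWalk_mul fun i j => by rw [abs_sub_comm]]
  set n : ℝ := ((2 * m : ℕ) : ℝ)
  set E := ∑ i, |y i - y (i + 1)| ^ p
  have hV := rpow_sum_le_card_rpow_mul_sum_rpow univ (fun i _ => abs_nonneg (y i - y (i + 1))) hp
  rw [card_univ, Fintype.card_fin] at hV
  have hn : 0 < n := Nat.cast_pos.2 (NeZero.pos _)
  have hkt : k * n ^ (max p 1 - 1) ≤ t :=
    calc k * n ^ (max p 1 - 1) ≤ n * n ^ (max p 1 - 1) := by
          gcongr
          exact Nat.cast_le.2 (by omega)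
      _ = n ^ max p 1 := by rw [Real.rpow_sub_one hn.ne', mul_div_cancel₀ _ hn.ne']
      _ ≤ t := ht
  have htE : 0 ≤ t * E := mul_nonneg (Nat.cast_nonneg t)
    (sum_nonneg fun _ _ => Real.rpow_nonneg (abs_nonneg _) _)
  calc k * ((m : ℝ) / 6) ^ p
      ≤ 2 * ∑ i, |(sawtooth m i : ℝ) - y i| ^ p + k * (∑ i, |y i - y (i + 1)|) ^ p :=
        mul_rpow_le_sum_abs_sawtooth_sub_rpow hk hp.le y
    _ ≤ 2 * ∑ i, |(sawtooth m i : ℝ) - y i| ^ p + k * n ^ (max p 1 - 1) * E := by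
        rw [mul_assoc]
        gcongr
    _ ≤ 2 * ∑ i, |(sawtooth m i : ℝ) - y i| ^ p + t * E := by gcongr
    _ ≤ _ := by linarith

lemma rpow_div_le_cotype_lhs {m k t : ℕ} [NeZero (2 * m)] (hm : m = 4 * k) {p : ℝ} (hp : 0 < p)
    (ht : ((2 * m : ℕ) : ℝ) ^ max p 1 ≤ t) (y : Fin (2 * m) → ℝ) :
    ((2 * m : ℕ) : ℝ) ^ p / (16 * 12 ^ p) ≤
      ((2 * m : ℕ) : ℝ)⁻¹ * ∑ i, |(sawtooth m i : ℝ) - y i| ^ p +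
        (t / ((2 * m : ℕ) : ℝ)) * ∑ i, ∑ j, cycleWalk (2 * m) i j * |y i - y j| ^ p := by
  have h := mul_rpow_le_cotype_lhs hm.ge hp ht y
  set n : ℝ := ((2 * m : ℕ) : ℝ)
  have hn : 0 < n := Nat.cast_pos.2 (NeZero.pos _)
  have hk : (k : ℝ) = n / 8 := by simp only [n, hm, Nat.cast_mul, Nat.cast_ofNat]; ring
  have hm' : (m : ℝ) / 6 = n / 12 := by simp only [n, hm, Nat.cast_mul, Nat.cast_ofNat]; ring
  rw [hk, hm', Real.div_rpow hn.le (by norm_num)] at h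
  rw [inv_mul_eq_div, div_mul_eq_mul_div, ← add_div, le_div_iff₀ hn]
  calc n ^ p / (16 * 12 ^ p) * n = n / 8 * (n ^ p / 12 ^ p) / 2 := by field_simp; ring
    _ ≤ _ := by linarith

theorem statement19 (p : ℝ) (hp0 : 0 < p) (hp2 : p < 2) (N : ℝ) (hN : 0 < N) :
    ∃ (n t : ℕ), 0 < n ∧ 0 < t ∧
      ∃ A : Matrix (Fin n) (Fin n) ℝ, IsStochastic A ∧ A.IsSymm ∧
        ∃ x : Fin n → ℝ, ∀ y : Fin n → ℝ,
          ¬((n : ℝ)⁻¹ * ∑ i, |x i - y i| ^ p +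
              ((t : ℝ) / (n : ℝ)) * ∑ i, ∑ j, A i j * |y i - y j| ^ p ≤
            N ^ p / (n : ℝ) * ∑ i, ∑ j, cesaro A t i j * |x i - x j| ^ p) := by
  set q := max p 1
  have hqp : q * (p / 2) < p := by nlinarith [max_lt hp2 one_lt_two]
  obtain ⟨k, hbig, hk⟩ := ((tendsto_natCast_atTop_atTop.comp (tendsto_atTop_mono
    (fun k => (by omega : k ≤ 2 * (4 * k))) tendsto_id)).eventually
      (eventually_mul_rpow_lt_rpow (32 * 12 ^ p * N ^ p) hqp) |>.and (eventually_gt_atTop 0)).exists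
  set m := 4 * k with hm
  have : NeZero (2 * m) := ⟨by omega⟩
  have hn : (1 : ℝ) ≤ (2 * m : ℕ) := Nat.one_le_cast.2 (by omega)
  set t := ⌈((2 * m : ℕ) : ℝ) ^ q⌉₊
  have ht : 0 < t := Nat.ceil_pos.2 (by positivity)
  refine ⟨2 * m, t, NeZero.pos _, ht, cycleWalk (2 * m),
    isStochastic_iff_mem_rowStochastic.2 cycleWalk_mem_rowStochastic, cycleWalk_isSymm,
    fun i => sawtooth m i, fun y hy => hbig.not_ge ?_⟩
  set n : ℝ := ((2 * m : ℕ) : ℝ)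
  have hcot := (rpow_div_le_cotype_lhs hm hp0 (Nat.le_ceil _) y).trans hy
  have hrow := fun i : Fin (2 * m) =>
    sum_cesaro_cycleWalk_mul_abs_sub_sawtooth_rpow_le ht hp0.le hp2.le i
  have hceil := natCeil_rpow_le (Real.one_le_rpow hn (by positivity)) (by positivity)
    (by linarith : p / 2 ≤ 1) (x := n ^ q)
  rw [← Real.rpow_mul (by positivity)] at hceil
  calc n ^ p = 16 * 12 ^ p * (n ^ p / (16 * 12 ^ p)) := by field_simp
    _ ≤ 16 * 12 ^ p * (N ^ p / n * ∑ _i : Fin (2 * m), (t : ℝ) ^ (p / 2)) := by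
        grw [hcot]
        gcongr with i
        exact hrow i
    _ ≤ 32 * 12 ^ p * N ^ p * n ^ (q * (p / 2)) := by
        simp only [sum_const, card_univ, Fintype.card_fin, nsmul_eq_mul]
        grw [hceil]
        field_simp
        linarith
end
end
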